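/- Let n, θ, ρ be natural numbers with n > 0 and θ > 0, let f_in : ℕ → ℕ and f_ex : ℕ → ℕ, and let s : ℕ → ℕ satisfy: s 1 = 1, and for every m with 1 < m ≤ ρ·θ, s m = s (m−1) + f_ex ((m−1)/θ) + 1 if θ divides m−1, and s m = s (m−1) + f_in (m−1) + 1 if θ does not divide m−1. Then for every m with 1 ≤ m ≤ ρ·θ, s m ≡ m + Σ_{i ∈ Finset.Ico 1 m, θ ∤ i} f_in i + Σ_{i ∈ Finset.Ico 1 m, θ ∣ i} f_ex (i/θ) (mod n). -/

import Mathlib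

/-!
Every step of the node sequence advances by one plus the jump taken after the previous packet, the
external jump `f_ex (i / θ)` when `θ ∣ i` closes a cycle and the internal jump `f_in i` otherwise.
Telescoping therefore gives `s m = m + ∑_{1 ≤ i < m} jump i` as an identity of natural numbers, and
splitting the sum according to `θ ∣ i` yields the closed form, even before reducing mod `n`.
-/

open Finset

def flowerJump (θ : ℕ) (f_in f_ex : ℕ → ℕ) (i : ℕ) : ℕ :=
  if θ ∣ i then f_ex (i / θ) else f_in i

theorem sum_flowerJump (θ : ℕ) (f_in f_ex : ℕ → ℕ) (I : Finset ℕ) :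
    ∑ i ∈ I, flowerJump θ f_in f_ex i =
      ∑ i ∈ I.filter (fun i => ¬ θ ∣ i), f_in i + ∑ i ∈ I.filter (fun i => θ ∣ i), f_ex (i / θ) := by
  simp only [flowerJump]
  rw [sum_ite, add_comm]

theorem eq_add_sum_Ico_of_succ_eq {M : Type*} [AddCommMonoid M] (s d : ℕ → M) (a N : ℕ)
    (hstep : ∀ m, a ≤ m → m < N → s (m + 1) = s m + d m) :
    ∀ m, a ≤ m → m ≤ N → s m = s a + ∑ i ∈ Ico a m, d i := by
  intro m ham
  induction m, ham using Nat.le_induction with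
  | base => simp
  | succ m ham ih =>
    intro hmN
    rw [hstep m ham hmN, ih (Nat.le_of_succ_le hmN), sum_Ico_succ_top ham, add_assoc]

theorem flower_node_sequence_closed_form_general (n θ ρ : ℕ)
    (f_in f_ex : ℕ → ℕ) (s : ℕ → ℕ) (hs1 : s 1 = 1)
    (hrec_ex : ∀ m, 1 < m → m ≤ ρ * θ → θ ∣ (m - 1) →
      s m = s (m - 1) + f_ex ((m - 1) / θ) + 1)
    (hrec_in : ∀ m, 1 < m → m ≤ ρ * θ → ¬ θ ∣ (m - 1) →
      s m = s (m - 1) + f_in (m - 1) + 1) :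
    ∀ m, 1 ≤ m → m ≤ ρ * θ →
      s m ≡ (m + ∑ i ∈ (Finset.Ico 1 m).filter (fun i => ¬ θ ∣ i), f_in i
               + ∑ i ∈ (Finset.Ico 1 m).filter (fun i => θ ∣ i), f_ex (i / θ)) [MOD n] := by
  have hstep : ∀ m, 1 ≤ m → m < ρ * θ → s (m + 1) = s m + (flowerJump θ f_in f_ex m + 1) := by
    intro m h1 hlt
    unfold flowerJump
    split_ifs with hθm
    · simpa [add_assoc] using hrec_ex (m + 1) (by omega) hlt (by simpa using hθm)
    · simpa [add_assoc] using hrec_in (m + 1) (by omega) hlt (by simpa using hθm)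
  intro m h1 hm
  rw [eq_add_sum_Ico_of_succ_eq s _ 1 (ρ * θ) hstep m h1 hm, hs1, sum_add_distrib,
    sum_flowerJump, sum_const, Nat.card_Ico, smul_eq_mul, mul_one]
  congr 1
  omega

/-- Theorem 1 of the paper: the node sequence `s` of a Flower code with multiple
rings, satisfying `s 1 = 1` and the jump recursion
`s m = s (m-1) + f_ex ((m-1)/θ) + 1` when `θ ∣ (m-1)` and
`s m = s (m-1) + f_in (m-1) + 1` otherwise (for `1 < m ≤ ρθ`), satisfies the
closed-form congruence
`s m ≡ m + Σ_{1 ≤ i < m, θ ∤ i} f_in i + Σ_{1 ≤ i < m, θ ∣ i} f_ex (i/θ) (mod n)`. -/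
theorem flower_node_sequence_closed_form (n θ ρ : ℕ) (hn : 0 < n) (hθ : 0 < θ)
    (f_in f_ex : ℕ → ℕ) (s : ℕ → ℕ) (hs1 : s 1 = 1)
    (hrec_ex : ∀ m, 1 < m → m ≤ ρ * θ → θ ∣ (m - 1) →
      s m = s (m - 1) + f_ex ((m - 1) / θ) + 1)
    (hrec_in : ∀ m, 1 < m → m ≤ ρ * θ → ¬ θ ∣ (m - 1) →
      s m = s (m - 1) + f_in (m - 1) + 1) :
    ∀ m, 1 ≤ m → m ≤ ρ * θ →
      s m ≡ (m + ∑ i ∈ (Finset.Ico 1 m).filter (fun i => ¬ θ ∣ i), f_in i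
               + ∑ i ∈ (Finset.Ico 1 m).filter (fun i => θ ∣ i), f_ex (i / θ)) [MOD n] :=
  flower_node_sequence_closed_form_general n θ ρ f_in f_ex s hs1 hrec_ex hrec_in
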